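/- For every odd natural number d there exists a polynomial Q with integer coefficients in two variables, depending only on d, such that for all natural numbers n and all real p, the d-th central binomial moment satisfies ∑_{j=0}^{n} C(n,j) p^j (1−p)^{n−j} (j−np)^d = (1−2p) · Q(n, p(1−p)). -/

import Mathlib

/-!
The factorial moments `E[S (S-1) ⋯ (S-m+1)] = n (n-1) ⋯ (n-m+1) p^m` show that every moment of
`S ~ Binom(n,p)`, hence the central moment `μ_d(n,p)`, is an integer polynomial in `n` and `p`.
Since `p² = p - p(1-p)`, that polynomial can be written `U(n, p(1-p)) + p V(n, p(1-p))`.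
For odd `d` the reflection `j ↦ n - j` gives `μ_d(n, 1-p) = -μ_d(n,p)`, i.e. `2U + V = 0` at every
point, so `μ_d = (1 - 2p) U(n, p(1-p))`.
-/

open Finset MvPolynomial

noncomputable def binomialExpectation (n : ℕ) (p : ℝ) : (ℕ → ℝ) →ₗ[ℝ] ℝ where
  toFun f := ∑ j ∈ range (n + 1), n.choose j * p ^ j * (1 - p) ^ (n - j) * f j
  map_add' f g := by simp only [Pi.add_apply, mul_add, sum_add_distrib]
  map_smul' c f := by
    simp only [Pi.smul_apply, smul_eq_mul, RingHom.id_apply, mul_sum]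
    exact sum_congr rfl fun j _ => by ring

theorem binomialExpectation_apply (n : ℕ) (p : ℝ) (f : ℕ → ℝ) :
    binomialExpectation n p f = ∑ j ∈ range (n + 1), n.choose j * p ^ j * (1 - p) ^ (n - j) * f j :=
  rfl

theorem binomialExpectation_const_one (n : ℕ) (p : ℝ) : binomialExpectation n p (fun _ => 1) = 1 :=
  calc binomialExpectation n p (fun _ => 1) = (p + (1 - p)) ^ n := by
        rw [binomialExpectation_apply, add_pow]; exact sum_congr rfl fun j _ => by ring
    _ = 1 := by rw [add_sub_cancel, one_pow]

theorem binomialExpectation_congr {n : ℕ} {p : ℝ} {f g : ℕ → ℝ} (h : ∀ j ≤ n, f j = g j) :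
    binomialExpectation n p f = binomialExpectation n p g := by
  simp only [binomialExpectation_apply]
  exact sum_congr rfl fun j hj => by rw [h j (mem_range_succ_iff.mp hj)]

theorem binomialExpectation_one_sub (n : ℕ) (p : ℝ) (f : ℕ → ℝ) :
    binomialExpectation n (1 - p) f = binomialExpectation n p (fun j => f (n - j)) := by
  rw [binomialExpectation_apply, ← sum_range_reflect]
  refine sum_congr rfl fun j hj => ?_
  have hj : j ≤ n := mem_range_succ_iff.mp hj
  rw [Nat.add_sub_cancel, Nat.choose_symm hj, Nat.sub_sub_self hj, sub_sub_cancel]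
  ring

theorem binomialExpectation_descFactorial (n m : ℕ) (p : ℝ) :
    binomialExpectation n p (fun j => (j.descFactorial m : ℝ)) = n.descFactorial m * p ^ m := by
  induction m generalizing n with
  | zero => simpa using binomialExpectation_const_one n p
  | succ m ih =>
    cases n with
    | zero => simp [binomialExpectation_apply]
    | succ n =>
      have hchoose (k : ℕ) : ((n + 1).choose (k + 1) : ℝ) * (k + 1) = (n + 1) * n.choose k := by
        exact_mod_cast (Nat.add_one_mul_choose_eq n k).symm
      calc binomialExpectation (n + 1) p (fun j => (j.descFactorial (m + 1) : ℝ))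
          = ∑ k ∈ range (n + 1), (n + 1).choose (k + 1) * p ^ (k + 1) * (1 - p) ^ (n - k)
              * (k + 1) * k.descFactorial m := by
            rw [binomialExpectation_apply, sum_range_succ']
            simp only [Nat.zero_descFactorial_succ, Nat.cast_zero, mul_zero, add_zero]
            refine sum_congr rfl fun k _ => ?_
            rw [Nat.succ_descFactorial_succ, Nat.add_sub_add_right]
            push_cast; ring
        _ = (n + 1) * p * binomialExpectation n p (fun j => (j.descFactorial m : ℝ)) := by
            rw [binomialExpectation_apply, mul_sum]
            refine sum_congr rfl fun k _ => ?_
            linear_combination p ^ (k + 1) * (1 - p) ^ (n - k) * k.descFactorial m * hchoose k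
        _ = (n + 1).descFactorial (m + 1) * p ^ (m + 1) := by
            rw [ih, Nat.succ_descFactorial_succ]; push_cast; ring

/-- The functions `(n, p) ↦ Q(n, p)` with `Q ∈ ℤ[X, Y]`, as the range of a ring hom so that closure
under the ring operations comes for free. -/
noncomputable def intPolyFunctions : Subring (ℕ → ℝ → ℝ) :=
  (RingHom.pi fun n : ℕ => RingHom.pi fun p : ℝ =>
    (aeval ![(n : ℝ), p] : MvPolynomial (Fin 2) ℤ →ₐ[ℤ] ℝ).toRingHom).range

theorem mem_intPolyFunctions {g : ℕ → ℝ → ℝ} :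
    g ∈ intPolyFunctions ↔ ∃ Q : MvPolynomial (Fin 2) ℤ, ∀ n p, g n p = aeval ![(n : ℝ), p] Q := by
  simp [intPolyFunctions, funext_iff, eq_comm]

theorem natCast_mem_intPolyFunctions : (fun (n : ℕ) (_ : ℝ) => (n : ℝ)) ∈ intPolyFunctions :=
  mem_intPolyFunctions.2 ⟨X 0, by simp⟩

theorem id_mem_intPolyFunctions : (fun (_ : ℕ) (p : ℝ) => p) ∈ intPolyFunctions :=
  mem_intPolyFunctions.2 ⟨X 1, by simp⟩

theorem descFactorial_mem_intPolyFunctions (m : ℕ) :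
    (fun (n : ℕ) (_ : ℝ) => (n.descFactorial m : ℝ)) ∈ intPolyFunctions :=
  mem_intPolyFunctions.2 ⟨Polynomial.aeval (X 0) (descPochhammer ℤ m), fun n p => by
    rw [← Polynomial.aeval_algHom_apply, aeval_X]
    simp [Polynomial.aeval_def, Polynomial.eval₂_eq_eval_map, descPochhammer_map,
      descPochhammer_eval_eq_descFactorial]⟩

theorem binomialExpectation_aeval_mem_intPolyFunctions (f : Polynomial ℤ) :
    (fun n p => binomialExpectation n p (fun j => Polynomial.aeval (j : ℝ) f)) ∈ intPolyFunctions := by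
  let S : Polynomial.Sequence ℤ :=
    ⟨descPochhammer ℤ, fun m => by
      rw [Polynomial.degree_eq_natDegree (monic_descPochhammer ℤ m).ne_zero, descPochhammer_natDegree]⟩
  have hf : f ∈ Submodule.span ℤ (Set.range S) := by
    rw [S.span fun m => by simp [S, (monic_descPochhammer ℤ m).leadingCoeff]]
    exact Submodule.mem_top
  induction hf using Submodule.span_induction with
  | mem f hf =>
    obtain ⟨m, rfl⟩ := hf
    have h := mul_mem (descFactorial_mem_intPolyFunctions m) (pow_mem id_mem_intPolyFunctions m)
    convert h using 3 with n p
    simp [S, Polynomial.aeval_def, Polynomial.eval₂_eq_eval_map, descPochhammer_map,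
      descPochhammer_eval_eq_descFactorial, binomialExpectation_descFactorial]
  | zero =>
    convert zero_mem intPolyFunctions with n p
    simp only [map_zero]
    exact map_zero (binomialExpectation n p)
  | add f g _ _ hf hg =>
    convert add_mem hf hg with n p
    simp only [map_add]
    exact map_add (binomialExpectation n p) _ _
  | smul z f _ hf =>
    convert zsmul_mem hf z with n p
    simp only [map_zsmul]
    exact map_zsmul (binomialExpectation n p) _ _

noncomputable def binomialCentralMoment (d n : ℕ) (p : ℝ) : ℝ :=
  binomialExpectation n p (fun j => ((j : ℝ) - n * p) ^ d)

theorem binomialExpectation_pow_mem_intPolyFunctions (k : ℕ) :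
    (fun n p => binomialExpectation n p (fun j => (j : ℝ) ^ k)) ∈ intPolyFunctions := by
  simpa using binomialExpectation_aeval_mem_intPolyFunctions (Polynomial.X ^ k)

theorem binomialCentralMoment_eq_sum (d n : ℕ) (p : ℝ) :
    binomialCentralMoment d n p = ∑ k ∈ range (d + 1),
      (-(n * p)) ^ (d - k) * d.choose k * binomialExpectation n p (fun j => (j : ℝ) ^ k) := by
  have hbinom : (fun j : ℕ => ((j : ℝ) - n * p) ^ d) =
      ∑ k ∈ range (d + 1), ((-(n * p)) ^ (d - k) * d.choose k) • fun j : ℕ => (j : ℝ) ^ k := by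
    ext j
    simp only [sub_eq_add_neg, add_pow, Finset.sum_apply, Pi.smul_apply, smul_eq_mul]
    exact sum_congr rfl fun k _ => by ring
  simp only [binomialCentralMoment, hbinom, map_sum, map_smul, smul_eq_mul]

theorem binomialCentralMoment_mem_intPolyFunctions (d : ℕ) :
    binomialCentralMoment d ∈ intPolyFunctions := by
  have hterm (k : ℕ) : (fun (n : ℕ) (p : ℝ) => (-(n * p)) ^ (d - k) * d.choose k *
      binomialExpectation n p (fun j => (j : ℝ) ^ k)) ∈ intPolyFunctions :=
    mul_mem (mul_mem (pow_mem (neg_mem (mul_mem natCast_mem_intPolyFunctions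
      id_mem_intPolyFunctions)) _) (natCast_mem _ _)) (binomialExpectation_pow_mem_intPolyFunctions k)
  convert sum_mem fun k (_ : k ∈ range (d + 1)) => hterm k
  ext n p
  simp only [binomialCentralMoment_eq_sum, Finset.sum_apply]

theorem binomialCentralMoment_one_sub {d : ℕ} (hd : Odd d) (n : ℕ) (p : ℝ) :
    binomialCentralMoment d n (1 - p) = -binomialCentralMoment d n p := by
  rw [binomialCentralMoment, binomialExpectation_one_sub, binomialCentralMoment, ← map_neg]
  refine binomialExpectation_congr fun j hj => ?_
  rw [Nat.cast_sub hj, show (n : ℝ) - j - n * (1 - p) = -(j - n * p) by ring, hd.neg_pow]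
  rfl

namespace MvPolynomial

variable {σ R : Type*} [CommRing R] [DecidableEq σ]

theorem exists_eq_bind₁_add_X_mul_bind₁ (i : σ) (P : MvPolynomial σ R) :
    ∃ U V : MvPolynomial σ R,
      P = bind₁ (Function.update X i (X i * (1 - X i))) U +
        X i * bind₁ (Function.update X i (X i * (1 - X i))) V := by
  set φ := bind₁ (Function.update (X : σ → MvPolynomial σ R) i (X i * (1 - X i)))
  induction P using MvPolynomial.induction_on with
  | C a => exact ⟨C a, 0, by simp [φ]⟩
  | add P Q hP hQ =>
    obtain ⟨U, V, rfl⟩ := hP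
    obtain ⟨U', V', rfl⟩ := hQ
    exact ⟨U + U', V + V', by simp only [map_add]; ring⟩
  | mul_X P j hP =>
    obtain ⟨U, V, rfl⟩ := hP
    by_cases hj : j = i
    · subst hj
      have hφ : φ (X j) = X j * (1 - X j) := by simp [φ]
      exact ⟨-(X j * V), U + V, by simp only [map_neg, map_mul, map_add, hφ]; ring⟩
    · have hφ : φ (X j) = X j := by simp [φ, hj]
      exact ⟨U * X j, V * X j, by simp only [map_mul, hφ]; ring⟩

end MvPolynomial

/-- for odd d, the d-th central binomial moment equals (1-2p)
times a polynomial with integer coefficients in n and σ² = p(1-p). -/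
theorem central_moment_odd_poly (d : ℕ) (hd : Odd d) :
    ∃ Q : MvPolynomial (Fin 2) ℤ, ∀ (n : ℕ) (p : ℝ),
      ∑ j ∈ Finset.range (n + 1),
          (n.choose j : ℝ) * p ^ j * (1 - p) ^ (n - j) * ((j : ℝ) - n * p) ^ d =
      (1 - 2 * p) * MvPolynomial.aeval ![(n : ℝ), p * (1 - p)] Q := by
  obtain ⟨P, hP⟩ := mem_intPolyFunctions.1 (binomialCentralMoment_mem_intPolyFunctions d)
  obtain ⟨U, V, rfl⟩ := exists_eq_bind₁_add_X_mul_bind₁ 1 P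
  have heval (x y : ℝ) (W : MvPolynomial (Fin 2) ℤ) :
      aeval ![x, y] (bind₁ (Function.update X 1 (X 1 * (1 - X 1))) W) = aeval ![x, y * (1 - y)] W := by
    rw [aeval_bind₁]
    congr 1
    ext j
    fin_cases j <;> simp
  refine ⟨U, fun n p => ?_⟩
  have hanti := binomialCentralMoment_one_sub hd n p
  simp only [hP, map_add, map_mul, heval, aeval_X, Matrix.cons_val_one, Matrix.cons_val_fin_one,
    sub_sub_cancel, mul_comm (1 - p) p] at hanti
  change binomialCentralMoment d n p = _
  simp only [hP, map_add, map_mul, heval, aeval_X, Matrix.cons_val_one, Matrix.cons_val_fin_one]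
  linear_combination p * hanti
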